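/- Let (E,M) be a factorization system on a finitely complete category C with terminal object 1, and let f: X → Y be adjunctible: for every point y: 1 → Y there exist a point x: 1 → X and an isomorphism Δ_f ν(y) ≅ ν(x) in C/X. Then f preserves colimits: for every m in M over X, every point x₀: 1 → X and every colimiting cone λ: m → ν(x₀), the image cone ∃_f λ: ∃_f m → ν(f ∘ x₀) is colimiting. -/

import Mathlib

open CategoryTheory CategoryTheory.Limits

universe v u

/-- `e ⊥ m`: every commutative square from `e` to `m` has a unique diagonal filler. -/
def IsOrth {C : Type u} [Category.{v} C] {A B M N : C} (e : A ⟶ B) (m : M ⟶ N) : Prop :=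
  ∀ (u : A ⟶ M) (v : B ⟶ N), e ≫ v = u ≫ m →
    ∃! w : B ⟶ M, e ≫ w = u ∧ w ≫ m = v

/-- `^⊥M`: the class of morphisms left-orthogonal to every morphism in `M`. -/
def leftOrth {C : Type u} [Category.{v} C] (M : MorphismProperty C) : MorphismProperty C :=
  fun _ _ e => ∀ ⦃M₀ N : C⦄ (m : M₀ ⟶ N), M m → IsOrth e m

/-- `E^⊥`: the class of morphisms right-orthogonal to every morphism in `E`. -/
def rightOrth {C : Type u} [Category.{v} C] (E : MorphismProperty C) : MorphismProperty C :=
  fun _ _ m => ∀ ⦃A B : C⦄ (e : A ⟶ B), E e → IsOrth e m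

/-- A pre-factorization system: a pair of classes `(E, M)` with `E = ^⊥M` and `M = E^⊥`. -/
structure PreFactorizationSystem (C : Type u) [Category.{v} C] where
  E : MorphismProperty C
  M : MorphismProperty C
  E_eq : E = leftOrth M
  M_eq : M = rightOrth E


/-- A factorization system with a chosen `(E,M)`-factorization `f = η f ≫ refl f` of every
morphism; `refl f` is the discrete reflection `↓f` of `f`. -/
structure FactorizationData (C : Type u) [Category.{v} C] extends PreFactorizationSystem C where
  mid : ∀ {A B : C}, (A ⟶ B) → C
  eta : ∀ {A B : C} (f : A ⟶ B), A ⟶ mid f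
  refl : ∀ {A B : C} (f : A ⟶ B), mid f ⟶ B
  eta_mem : ∀ {A B : C} (f : A ⟶ B), E (eta f)
  refl_mem : ∀ {A B : C} (f : A ⟶ B), M (refl f)
  fac : ∀ {A B : C} (f : A ⟶ B), eta f ≫ refl f = f

variable {C : Type u} [Category.{v} C]

/-- A cone with base `m : M₀ ⟶ X` and vertex the point `x : 1 ⟶ X` is a morphism
`lam : m ⟶ ν(x)` over `X`, where `ν(x) = ↓x` is the neighborhood of `x`. -/
def IsCone [HasTerminal C] (D : FactorizationData C) {M₀ X : C} (m : M₀ ⟶ X)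
    (x : ⊤_ C ⟶ X) (lam : M₀ ⟶ D.mid x) : Prop :=
  lam ≫ D.refl x = m

/-- A cone `lam : m ⟶ ν(x)` is colimiting if every cone `mu : m ⟶ ν(y)` factors uniquely
through it via a morphism `ν(x) ⟶ ν(y)` over `X`; then `x` is the colimit of `m`. -/
def IsColimiting [HasTerminal C] (D : FactorizationData C) {M₀ X : C} (m : M₀ ⟶ X)
    (x : ⊤_ C ⟶ X) (lam : M₀ ⟶ D.mid x) : Prop :=
  ∀ (y : ⊤_ C ⟶ X) (mu : M₀ ⟶ D.mid y), IsCone D m y mu →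
    ∃! θ : D.mid x ⟶ D.mid y, θ ≫ D.refl y = D.refl x ∧ lam ≫ θ = mu

/-- The unique diagonal filler of a square from a morphism in `E` to a morphism in `M`. -/
noncomputable def fill (D : FactorizationData C) {A B M₀ N : C} {e : A ⟶ B} {m : M₀ ⟶ N}
    (he : D.E e) (hm : D.M m) (u : A ⟶ M₀) (v : B ⟶ N) (h : e ≫ v = u ≫ m) : B ⟶ M₀ :=
  (((D.E_eq ▸ he : leftOrth D.M e) m hm u v h).exists).choose

lemma fill_spec (D : FactorizationData C) {A B M₀ N : C} {e : A ⟶ B} {m : M₀ ⟶ N}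
    (he : D.E e) (hm : D.M m) (u : A ⟶ M₀) (v : B ⟶ N) (h : e ≫ v = u ≫ m) :
    e ≫ fill D he hm u v h = u ∧ fill D he hm u v h ≫ m = v :=
  (((D.E_eq ▸ he : leftOrth D.M e) m hm u v h).exists).choose_spec

/-- The canonical comparison `∃_f ν(x) ≅ ν(f ∘ x)`: the map `↓x ⟶ ↓(f ∘ x)` over `f`. -/
noncomputable def canMap (D : FactorizationData C) {A X Y : C} (x : A ⟶ X) (f : X ⟶ Y) :
    D.mid x ⟶ D.mid (x ≫ f) :=
  fill D (D.eta_mem x) (D.refl_mem (x ≫ f)) (D.eta (x ≫ f)) (D.refl x ≫ f)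
    (by rw [← Category.assoc, D.fac, D.fac])

lemma canMap_comm (D : FactorizationData C) {A X Y : C} (x : A ⟶ X) (f : X ⟶ Y) :
    canMap D x f ≫ D.refl (x ≫ f) = D.refl x ≫ f :=
  (fill_spec D _ _ _ _ _).2

/-- The image cone `∃_f lam : ∃_f m ⟶ ν(f ∘ x)` of a cone `lam : m ⟶ ν(x)` along `f : X ⟶ Y`,
where `∃_f m = ↓(f ∘ m)`; it is obtained by functoriality of the reflection `↓(f ∘ -)` and the
canonical isomorphism `∃_f ν(x) ≅ ν(f ∘ x)`. -/
noncomputable def imageCone [HasTerminal C] (D : FactorizationData C) {M₀ X Y : C}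
    (f : X ⟶ Y) (m : M₀ ⟶ X) (x : ⊤_ C ⟶ X) (lam : M₀ ⟶ D.mid x)
    (hc : IsCone D m x lam) : D.mid (m ≫ f) ⟶ D.mid (x ≫ f) :=
  fill D (D.eta_mem (m ≫ f)) (D.refl_mem (x ≫ f)) (lam ≫ canMap D x f) (D.refl (m ≫ f))
    (by rw [D.fac, Category.assoc, canMap_comm, ← Category.assoc, hc])

/-! Being colimiting is bijectivity of precomposition with the cone on hom-sets of a slice
category. Since `η` is in `E`, maps from `↓p` into a map in `M` are the same as maps from `p`;
hence over `Y`, precomposition with `∃_f λ` into `ν(y)` is identified with precomposition with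
`Σ_f λ`, where `Σ_f = Over.map f`. The adjunction `Σ_f ⊣ f*` and adjunctibility
`f* ν(y) ≅ ν(x)` turn this into precomposition with `λ` into `ν(x)`, which is bijective because
`λ` is colimiting. -/

theorem Function.Bijective.iff_of_comp_eq {α β γ δ : Sort*} {f : α → β} {g : γ → δ}
    {u : α → γ} {v : β → δ} (hu : u.Bijective) (hv : v.Bijective) (h : v ∘ f = g ∘ u) :
    f.Bijective ↔ g.Bijective := by
  rw [← hv.of_comp_iff' f, h, Function.Bijective.of_comp_iff g hu]

section Precomp

variable {𝒞 𝒟 : Type*} [Category 𝒞] [Category 𝒟]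

theorem CategoryTheory.bijective_precomp_iff_of_iso {P Q N N' : 𝒟} (g : P ⟶ Q) (e : N ≅ N') :
    (fun θ : Q ⟶ N => g ≫ θ).Bijective ↔ (fun θ : Q ⟶ N' => g ≫ θ).Bijective :=
  Function.Bijective.iff_of_comp_eq ((Iso.refl Q).homCongr e).bijective
    ((Iso.refl P).homCongr e).bijective (by funext θ; simp)

theorem CategoryTheory.Adjunction.bijective_precomp_map_iff {L : 𝒞 ⥤ 𝒟} {R : 𝒟 ⥤ 𝒞}
    (adj : L ⊣ R) {P Q : 𝒞} (g : P ⟶ Q) (N : 𝒟) :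
    (fun θ : L.obj Q ⟶ N => L.map g ≫ θ).Bijective ↔
      (fun θ : Q ⟶ R.obj N => g ≫ θ).Bijective :=
  Function.Bijective.iff_of_comp_eq (adj.homEquiv Q N).bijective (adj.homEquiv P N).bijective
    (by funext θ; simp [adj.homEquiv_naturality_left])

end Precomp

namespace FactorizationData

variable (D : FactorizationData C)

theorem isOrth {A B M₀ N : C} {e : A ⟶ B} {m : M₀ ⟶ N} (he : D.E e) (hm : D.M m) :
    IsOrth e m :=
  (D.E_eq ▸ he : leftOrth D.M e) m hm

theorem bijective_precomp {Y : C} {A B N : Over Y} (e : A ⟶ B) (he : D.E e.left)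
    (hN : D.M N.hom) : (fun θ : B ⟶ N => e ≫ θ).Bijective := by
  have horth := D.isOrth he hN
  constructor
  · intro θ₁ θ₂ h
    ext
    exact (horth (e.left ≫ θ₁.left) B.hom (by simp)).unique ⟨rfl, Over.w θ₁⟩
      ⟨congrArg Over.Hom.left h.symm, Over.w θ₂⟩
  · intro u
    obtain ⟨w, ⟨hw, hwN⟩, -⟩ := horth u.left B.hom (by simp)
    exact ⟨Over.homMk w hwN, by ext; exact hw⟩

def etaOver {A B : C} (p : A ⟶ B) : Over.mk p ⟶ Over.mk (D.refl p) :=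
  Over.homMk (D.eta p) (D.fac p)

end FactorizationData

section CanMap

variable (D : FactorizationData C) {A X Y : C} (x : A ⟶ X) (f : X ⟶ Y)

noncomputable def canMapOver :
    (Over.map f).obj (Over.mk (D.refl x)) ⟶ Over.mk (D.refl (x ≫ f)) :=
  Over.homMk (canMap D x f) (canMap_comm D x f)

theorem eta_comp_canMap : D.eta x ≫ canMap D x f = D.eta (x ≫ f) :=
  (fill_spec D _ _ _ _ _).1

theorem map_etaOver_comp_canMapOver :
    (Over.map f).map (D.etaOver x) ≫ canMapOver D x f = D.etaOver (x ≫ f) :=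
  Over.OverMorphism.ext (eta_comp_canMap D x f)

theorem bijective_precomp_canMapOver {N : Over Y} (hN : D.M N.hom) :
    (fun θ : Over.mk (D.refl (x ≫ f)) ⟶ N => canMapOver D x f ≫ θ).Bijective := by
  refine (D.bijective_precomp ((Over.map f).map (D.etaOver x)) (D.eta_mem x) hN).of_comp_iff' _
    |>.1 ?_
  simpa only [Function.comp_def, ← Category.assoc, map_etaOver_comp_canMapOver] using
    D.bijective_precomp (A := (Over.map f).obj (Over.mk x)) (D.etaOver (x ≫ f))
      (D.eta_mem (x ≫ f)) hN

end CanMap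

noncomputable def IsCone.overHom [HasTerminal C] {D : FactorizationData C} {M₀ X : C}
    {m : M₀ ⟶ X} {x : ⊤_ C ⟶ X} {lam : M₀ ⟶ D.mid x} (hc : IsCone D m x lam) :
    Over.mk m ⟶ Over.mk (D.refl x) :=
  Over.homMk lam hc

section ImageCone

variable [HasTerminal C] (D : FactorizationData C) {M₀ X Y : C} (f : X ⟶ Y) (m : M₀ ⟶ X)
  (x : ⊤_ C ⟶ X) (lam : M₀ ⟶ D.mid x) (hc : IsCone D m x lam)

theorem eta_comp_imageCone :
    D.eta (m ≫ f) ≫ imageCone D f m x lam hc = lam ≫ canMap D x f :=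
  (fill_spec D _ _ _ _ _).1

theorem imageCone_isCone :
    IsCone D (D.refl (m ≫ f)) (x ≫ f) (imageCone D f m x lam hc) :=
  (fill_spec D _ _ _ _ _).2

theorem etaOver_comp_imageCone :
    D.etaOver (m ≫ f) ≫ (imageCone_isCone D f m x lam hc).overHom =
      (Over.map f).map hc.overHom ≫ canMapOver D x f :=
  Over.OverMorphism.ext (eta_comp_imageCone D f m x lam hc)

theorem bijective_precomp_imageCone_iff {N : Over Y} (hN : D.M N.hom) :
    (fun θ : Over.mk (D.refl (x ≫ f)) ⟶ N =>
        (imageCone_isCone D f m x lam hc).overHom ≫ θ).Bijective ↔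
      (fun θ : (Over.map f).obj (Over.mk (D.refl x)) ⟶ N =>
        (Over.map f).map hc.overHom ≫ θ).Bijective :=
  Function.Bijective.iff_of_comp_eq (bijective_precomp_canMapOver D x f hN)
    (D.bijective_precomp (D.etaOver (m ≫ f)) (D.eta_mem (m ≫ f)) hN)
    (by funext θ; simp only [Function.comp_apply, ← Category.assoc, etaOver_comp_imageCone])

theorem isColimiting_iff_bijective_precomp :
    IsColimiting D m x lam ↔ ∀ y : ⊤_ C ⟶ X,
      (fun θ : Over.mk (D.refl x) ⟶ Over.mk (D.refl y) => hc.overHom ≫ θ).Bijective := by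
  simp only [Function.bijective_iff_existsUnique]
  refine forall_congr' fun y => ⟨fun h mu => ?_, fun h mu hmu => ?_⟩
  · obtain ⟨θ, ⟨hθ, hlam⟩, huniq⟩ := h mu.left (Over.w mu)
    refine ⟨Over.homMk θ hθ, by ext; exact hlam, fun θ' hθ' => ?_⟩
    ext
    exact huniq θ'.left ⟨Over.w θ', congrArg Over.Hom.left hθ'⟩
  · obtain ⟨θ, hθ, huniq⟩ := h (Over.homMk mu hmu)
    refine ⟨θ.left, ⟨Over.w θ, congrArg Over.Hom.left hθ⟩, fun θ' ⟨hθ', hlam⟩ => ?_⟩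
    exact congrArg Over.Hom.left (huniq (Over.homMk θ' hθ') (by ext; exact hlam))

end ImageCone

theorem adjunctible_preserves_colimits_general
    [HasFiniteLimits C] (D : FactorizationData C) {X Y : C} (f : X ⟶ Y)
    (hadj : ∀ y : ⊤_ C ⟶ Y, ∃ x : ⊤_ C ⟶ X,
      Nonempty ((Over.mk (pullback.fst f (D.refl y)) : Over X) ≅ Over.mk (D.refl x)))
    {M₀ : C} (m : M₀ ⟶ X) (x₀ : ⊤_ C ⟶ X) (lam : M₀ ⟶ D.mid x₀)
    (hc : IsCone D m x₀ lam) (hcolim : IsColimiting D m x₀ lam) :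
    IsColimiting D (D.refl (m ≫ f)) (x₀ ≫ f) (imageCone D f m x₀ lam hc) := by
  refine (isColimiting_iff_bijective_precomp D _ _ _ (imageCone_isCone D f m x₀ lam hc)).2
    fun y => ?_
  obtain ⟨x, ⟨φ⟩⟩ := hadj y
  let pullbackIso : (Over.pullback f).obj (Over.mk (D.refl y)) ≅
      Over.mk (pullback.fst f (D.refl y)) :=
    Over.isoMk (pullbackSymmetry _ _) (by simp)
  rw [bijective_precomp_imageCone_iff D f m x₀ lam hc (D.refl_mem y),
    (Over.mapPullbackAdj f).bijective_precomp_map_iff,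
    bijective_precomp_iff_of_iso _ (pullbackIso ≪≫ φ)]
  exact (isColimiting_iff_bijective_precomp D m x₀ lam hc).1 hcolim x

/-- if `f : X ⟶ Y` is adjunctible (for every point `y : 1 ⟶ Y` there is a point
`x : 1 ⟶ X` with `Δ_f ν(y) ≅ ν(x)` in `C/X`), then `f` preserves colimits: for every `m` in `M`
over `X` and every colimiting cone `lam : m ⟶ ν(x₀)`, the image cone
`∃_f lam : ∃_f m ⟶ ν(f ∘ x₀)` is colimiting. -/
theorem adjunctible_preserves_colimits
    [HasFiniteLimits C] (D : FactorizationData C) {X Y : C} (f : X ⟶ Y)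
    (hadj : ∀ y : ⊤_ C ⟶ Y, ∃ x : ⊤_ C ⟶ X,
      Nonempty ((Over.mk (pullback.fst f (D.refl y)) : Over X) ≅ Over.mk (D.refl x)))
    {M₀ : C} (m : M₀ ⟶ X) (hm : D.M m) (x₀ : ⊤_ C ⟶ X) (lam : M₀ ⟶ D.mid x₀)
    (hc : IsCone D m x₀ lam) (hcolim : IsColimiting D m x₀ lam) :
    IsColimiting D (D.refl (m ≫ f)) (x₀ ≫ f) (imageCone D f m x₀ lam hc) :=
  adjunctible_preserves_colimits_general D f hadj m x₀ lam hc hcolim
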